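/- Let n ≥ 1 be an integer and let α > 0. There exists a constant C = C(n,α) > 0 such that for all s, t > 0 and all x, y ∈ ℝⁿ, ∫_{ℝⁿ} [ s^α / (s + |x−u|)^{n+α} ] · [ t^α / (t + |u−y|)^{n+α} ] du ≤ C (s+t)^α / (s + t + |x−y|)^{n+α}. -/

import Mathlib

/-!
Since `|x - y| ≤ |x - u| + |u - y|`, for every `u` one of `s + |x - u|`, `t + |u - y|` is at least
`(s + t + |x - y|) / 2`; bounding that factor accordingly leaves the other factor alone, whose
integral over `u` is, by translation and dilation by `t⁻¹` (resp. `s⁻¹`), the finite constant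
`∫ (1 + |v|)^{-(n+α)} dv`, independent of the scale.
-/

open MeasureTheory Real Module

lemma div_rpow_le_two_rpow_mul_div {c A B p : ℝ} (hc : 0 ≤ c) (hA : 0 < A) (hB : 0 < B)
    (hp : 0 ≤ p) (hBA : B ≤ 2 * A) : c / A ^ p ≤ 2 ^ p * c / B ^ p := calc
  c / A ^ p = 2 ^ p * c / (2 * A) ^ p := by
    rw [mul_rpow zero_le_two hA.le, mul_div_mul_left _ _ (by positivity)]
  _ ≤ 2 ^ p * c / B ^ p := by gcongr

-- Since `r ≤ a + b`, one of `s + a`, `t + b` is at least `(s + t + r) / 2`.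
lemma rpow_div_mul_rpow_div_le {α p s t a b r : ℝ} (hs : 0 < s) (ht : 0 < t) (ha : 0 ≤ a)
    (hb : 0 ≤ b) (hr0 : 0 ≤ r) (hr : r ≤ a + b) (hp : 0 ≤ p) :
    s ^ α / (s + a) ^ p * (t ^ α / (t + b) ^ p)
      ≤ 2 ^ p * s ^ α / (s + t + r) ^ p * (t ^ α / (t + b) ^ p)
        + 2 ^ p * t ^ α / (s + t + r) ^ p * (s ^ α / (s + a) ^ p) := by
  have hφs : 0 ≤ s ^ α / (s + a) ^ p := by positivity
  have hφt : 0 ≤ t ^ α / (t + b) ^ p := by positivity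
  have hc₁ : 0 ≤ 2 ^ p * s ^ α / (s + t + r) ^ p * (t ^ α / (t + b) ^ p) := by positivity
  have hc₂ : 0 ≤ 2 ^ p * t ^ α / (s + t + r) ^ p * (s ^ α / (s + a) ^ p) := by positivity
  rcases le_total (t + b) (s + a) with h | h
  · have := div_rpow_le_two_rpow_mul_div (rpow_nonneg hs.le α) (A := s + a) (by positivity)
      (by positivity : 0 < s + t + r) hp (by linarith)
    linarith [mul_le_mul_of_nonneg_right this hφt]
  · have := div_rpow_le_two_rpow_mul_div (rpow_nonneg ht.le α) (A := t + b) (by positivity)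
      (by positivity : 0 < s + t + r) hp (by linarith)
    linarith [mul_le_mul_of_nonneg_left this hφs]

lemma rpow_div_add_rpow_eq (n : ℕ) (α : ℝ) {t d : ℝ} (ht : 0 < t) (hd : 0 ≤ d) :
    t ^ α / (t + d) ^ ((n : ℝ) + α) = (t ^ n)⁻¹ * (1 + t⁻¹ * d) ^ (-((n : ℝ) + α)) := by
  have h : 1 + t⁻¹ * d = t⁻¹ * (t + d) := by field_simp
  rw [h, mul_rpow (by positivity) (by positivity), inv_rpow ht.le, rpow_neg ht.le, inv_inv,
    rpow_neg (by positivity), rpow_add ht, rpow_natCast]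
  field_simp

section Haar

variable {E : Type*} [NormedAddCommGroup E] [NormedSpace ℝ E] [FiniteDimensional ℝ E]
  [MeasurableSpace E] [BorelSpace E] (μ : Measure E) [μ.IsAddHaarMeasure]

lemma lintegral_comp_inv_smul {t : ℝ} (ht : 0 < t) (f : E → ENNReal) (hf : Measurable f) :
    ∫⁻ u, f (t⁻¹ • u) ∂μ = ENNReal.ofReal (t ^ finrank ℝ E) * ∫⁻ v, f v ∂μ := by
  rw [← lintegral_map hf (measurable_const_smul _), Measure.map_addHaar_smul μ (by positivity),
    lintegral_smul_measure, smul_eq_mul, inv_pow, inv_inv, abs_of_pos (by positivity)]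

lemma lintegral_rpow_div_add_dist_eq (α : ℝ) {t : ℝ} (ht : 0 < t) (y : E) :
    ∫⁻ u, ENNReal.ofReal (t ^ α / (t + dist u y) ^ ((finrank ℝ E : ℝ) + α)) ∂μ
      = ∫⁻ v, ENNReal.ofReal ((1 + ‖v‖) ^ (-((finrank ℝ E : ℝ) + α))) ∂μ := by
  have hscale (u : E) : ENNReal.ofReal (t ^ α / (t + ‖u‖) ^ ((finrank ℝ E : ℝ) + α))
      = ENNReal.ofReal ((t ^ finrank ℝ E)⁻¹)
        * ENNReal.ofReal ((1 + ‖t⁻¹ • u‖) ^ (-((finrank ℝ E : ℝ) + α))) := by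
    rw [norm_smul, norm_inv, norm_of_nonneg ht.le, ← ENNReal.ofReal_mul (by positivity),
      rpow_div_add_rpow_eq _ _ ht (norm_nonneg u)]
  simp_rw [dist_eq_norm]
  rw [lintegral_sub_right_eq_self (fun u ↦ ENNReal.ofReal (t ^ α / (t + ‖u‖) ^ _)) y]
  simp_rw [hscale]
  rw [lintegral_const_mul' _ _ ENNReal.ofReal_ne_top,
    lintegral_comp_inv_smul μ ht (fun v ↦ ENNReal.ofReal ((1 + ‖v‖) ^ _)) (by fun_prop),
    ← mul_assoc, ← ENNReal.ofReal_mul (by positivity), inv_mul_cancel₀ (by positivity),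
    ENNReal.ofReal_one, one_mul]

theorem lintegral_rpow_div_mul_rpow_div_le {α : ℝ} (hα : 0 ≤ α) {s t : ℝ} (hs : 0 < s)
    (ht : 0 < t) (x y : E) :
    ∫⁻ u, ENNReal.ofReal (s ^ α / (s + dist x u) ^ ((finrank ℝ E : ℝ) + α)
        * (t ^ α / (t + dist u y) ^ ((finrank ℝ E : ℝ) + α))) ∂μ
      ≤ ENNReal.ofReal (2 ^ ((finrank ℝ E : ℝ) + α + 1) * (s + t) ^ α
          / (s + t + dist x y) ^ ((finrank ℝ E : ℝ) + α))
        * ∫⁻ v, ENNReal.ofReal ((1 + ‖v‖) ^ (-((finrank ℝ E : ℝ) + α))) ∂μ := by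
  set p : ℝ := (finrank ℝ E : ℝ) + α
  set I := ∫⁻ v, ENNReal.ofReal ((1 + ‖v‖) ^ (-p)) ∂μ
  set r := dist x y
  have hp : 0 ≤ p := by positivity
  set c₁ := 2 ^ p * s ^ α / (s + t + r) ^ p
  set c₂ := 2 ^ p * t ^ α / (s + t + r) ^ p
  have hpointwise (u : E) :
      ENNReal.ofReal (s ^ α / (s + dist x u) ^ p * (t ^ α / (t + dist u y) ^ p))
        ≤ ENNReal.ofReal c₁ * ENNReal.ofReal (t ^ α / (t + dist u y) ^ p)
          + ENNReal.ofReal c₂ * ENNReal.ofReal (s ^ α / (s + dist x u) ^ p) := by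
    rw [← ENNReal.ofReal_mul (by positivity), ← ENNReal.ofReal_mul (by positivity),
      ← ENNReal.ofReal_add (by positivity) (by positivity)]
    exact ENNReal.ofReal_le_ofReal <| rpow_div_mul_rpow_div_le hs ht dist_nonneg dist_nonneg
      dist_nonneg (dist_triangle x u y) hp
  have hc : c₁ + c₂ ≤ 2 ^ (p + 1) * (s + t) ^ α / (s + t + r) ^ p := by
    rw [← add_div, ← mul_add, rpow_add_one two_ne_zero, mul_assoc]
    gcongr
    linarith [rpow_le_rpow hs.le (le_add_of_nonneg_right ht.le) hα,
      rpow_le_rpow ht.le (le_add_of_nonneg_left hs.le) hα]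
  calc _ ≤ ∫⁻ u, (ENNReal.ofReal c₁ * ENNReal.ofReal (t ^ α / (t + dist u y) ^ p)
          + ENNReal.ofReal c₂ * ENNReal.ofReal (s ^ α / (s + dist x u) ^ p)) ∂μ :=
        lintegral_mono hpointwise
    _ = ENNReal.ofReal c₁ * I + ENNReal.ofReal c₂ * I := by
        have hx := lintegral_rpow_div_add_dist_eq μ α hs x
        simp_rw [dist_comm _ x] at hx
        rw [lintegral_add_left (by fun_prop), lintegral_const_mul' _ _ ENNReal.ofReal_ne_top,
          lintegral_const_mul' _ _ ENNReal.ofReal_ne_top, lintegral_rpow_div_add_dist_eq μ α ht,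
          hx]
    _ ≤ _ := by
        rw [← add_mul, ← ENNReal.ofReal_add (by positivity) (by positivity)]
        gcongr

end Haar

theorem stmt_3 (n : ℕ) (α : ℝ) (hα : 0 < α) :
    ∃ C > 0, ∀ s > (0:ℝ), ∀ t > (0:ℝ), ∀ x y : EuclideanSpace ℝ (Fin n),
      (∫⁻ u, ENNReal.ofReal
          ((s ^ α / (s + dist x u) ^ ((n:ℝ) + α)) *
           (t ^ α / (t + dist u y) ^ ((n:ℝ) + α))))
      ≤ ENNReal.ofReal (C * (s + t) ^ α / (s + t + dist x y) ^ ((n:ℝ) + α)) := by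
  set I := ∫⁻ v : EuclideanSpace ℝ (Fin n), ENNReal.ofReal ((1 + ‖v‖) ^ (-((n : ℝ) + α)))
  have hI : I ≠ ⊤ := (finite_integral_one_add_norm (by simpa using hα)).ne
  refine ⟨2 ^ ((n : ℝ) + α + 1) * (I.toReal + 1), by positivity, fun s hs t ht x y => ?_⟩
  have key := lintegral_rpow_div_mul_rpow_div_le volume hα.le hs ht x y
  rw [finrank_euclideanSpace_fin] at key
  calc _ ≤ _ := key
    _ ≤ ENNReal.ofReal (2 ^ ((n : ℝ) + α + 1) * (s + t) ^ α / (s + t + dist x y) ^ ((n : ℝ) + α))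
          * ENNReal.ofReal (I.toReal + 1) := by
        gcongr
        exact (ENNReal.le_ofReal_iff_toReal_le hI (by positivity)).2 (by linarith)
    _ = _ := by
        rw [← ENNReal.ofReal_mul (by positivity)]
        ring_nf
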